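/- Fix integers n ≥ 1 and N ≥ 1, and real numbers α_1, …, α_n. Suppose the set Γ = { x ∈ ℝ^N : x_1, …, x_N ≥ 0 and Σ_{m=1}^{N} x_m^{2j+1} = α_j for j = 1, …, n } is nonempty. Then: (i) the function x ↦ (−1)^n Σ_{m=1}^{N} x_m^{2n+3} attains its minimum on Γ; and (ii) for every minimizer (β_1, …, β_N) ∈ Γ of this function, the nonzero coordinates among β_1, …, β_N take at most n distinct values. -/

import Mathlib

/-!
Γ is closed and, since `x_m³ ≤ α_1`, bounded, so the continuous energy attains its minimum.
If a minimizer `β` had `n + 1` distinct nonzero values `v_0, …, v_n`, consider the first `n + 1`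
odd power sums `x ↦ (∑ x_i^{2j+3})_{j ≤ n}` on `ℝ^{n+1}`. Its Jacobian at `v` factors as
`diag(2j+3) · (diag(v_i²) · Vandermonde(v_i²))ᵀ`, hence is invertible, and by the inverse function
theorem the map is open at `v`. So the `v_i` can be moved, keeping them positive and the first
`n` power sums fixed, while the `(n+1)`-st one is pushed in either direction; substituting them
back into `β` gives a point of Γ of strictly lower energy.
-/

open Filter Function Matrix Set Topology

section PowerSums

variable {ι : Type*} [Fintype ι]

/-- The index `j` stands for the paper's `j + 1`: the exponent is `2 (j + 1) + 1`. -/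
noncomputable def oddPowerSum (x : ι → ℝ) (j : ℕ) : ℝ := ∑ i, x i ^ (2 * j + 3)

lemma continuous_oddPowerSum (j : ℕ) : Continuous fun x : ι → ℝ => oddPowerSum x j :=
  continuous_finsetSum _ fun i _ => (continuous_apply i).pow _

lemma le_max_one_oddPowerSum_zero {x : ι → ℝ} (hx : ∀ i, 0 ≤ x i) (i : ι) :
    x i ≤ max 1 (oddPowerSum x 0) := by
  rcases le_total (x i) 1 with h | h
  · exact le_max_of_le_left h
  · refine le_max_of_le_right ?_
    calc x i ≤ x i ^ 3 := le_self_pow₀ h (by norm_num)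
      _ ≤ oddPowerSum x 0 :=
        Finset.single_le_sum (fun k _ => pow_nonneg (hx k) 3) (Finset.mem_univ i)

lemma isCompact_setOf_nonneg_oddPowerSum_eq {n : ℕ} (hn : 1 ≤ n) (α : Fin n → ℝ) :
    IsCompact {x : ι → ℝ | (∀ i, 0 ≤ x i) ∧ ∀ j : Fin n, oddPowerSum x j = α j} := by
  let j₀ : Fin n := ⟨0, hn⟩
  refine (isCompact_univ_pi fun _ => isCompact_Icc (a := 0) (b := max 1 (α j₀))).of_isClosed_subset
    ?_ fun x ⟨hx, hxα⟩ i _ => ⟨hx i, hxα j₀ ▸ le_max_one_oddPowerSum_zero hx i⟩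
  simp only [ofPred_and, ofPred_forall]
  exact (isClosed_iInter fun i => isClosed_le continuous_const (continuous_apply i)).inter
    (isClosed_iInter fun j => isClosed_eq (continuous_oddPowerSum j) continuous_const)

lemma sum_comp_extend_add {κ α M : Type*} [Fintype κ] [AddCommMonoid M] {e : ι → κ}
    (he : Injective e) (g : ι → α) (b : κ → α) (F : α → M) :
    ∑ k, F (extend e g b k) + ∑ i, F (b (e i)) = ∑ k, F (b k) + ∑ i, F (g i) := by
  classical
  have hsplit (h : κ → α) :
      ∑ k, F (h k) = ∑ k ∈ (Finset.univ.image e)ᶜ, F (h k) + ∑ i, F (h (e i)) := by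
    rw [← Finset.sum_compl_add_sum (Finset.univ.image e), Finset.sum_image fun a _ b _ h => he h]
  have hout : ∀ k ∈ (Finset.univ.image e)ᶜ, F (extend e g b k) = F (b k) := fun k hk =>
    congrArg F (extend_apply' g b k (by simpa using hk))
  rw [hsplit, hsplit b, Finset.sum_congr rfl hout]
  simp only [he.extend_apply]
  abel

end PowerSums

lemma hasStrictFDerivAt_sum_pow {ι : Type*} [Fintype ι] (p : ℕ) (t : ι → ℝ) :
    HasStrictFDerivAt (fun x : ι → ℝ => ∑ i, x i ^ p)
      (∑ i, ((p : ℝ) * t i ^ (p - 1)) •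
        ContinuousLinearMap.proj (R := ℝ) (φ := fun _ : ι => ℝ) i) t :=
  HasStrictFDerivAt.fun_sum fun i _ =>
    (hasStrictDerivAt_pow p (t i)).comp_hasStrictFDerivAt t (hasStrictFDerivAt_apply i t)

section Jacobian

variable {k : ℕ}

noncomputable def oddPowerSums (k : ℕ) (x : Fin k → ℝ) : Fin k → ℝ := fun j => oddPowerSum x j

noncomputable def oddPowerSumsJacobian (t : Fin k → ℝ) : Matrix (Fin k) (Fin k) ℝ :=
  .of fun j i => (2 * (j : ℕ) + 3 : ℝ) * t i ^ (2 * (j : ℕ) + 2)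

lemma hasStrictFDerivAt_oddPowerSums (t : Fin k → ℝ) :
    HasStrictFDerivAt (oddPowerSums k)
      (Matrix.toLin' (oddPowerSumsJacobian t)).toContinuousLinearMap t := by
  refine hasStrictFDerivAt_pi'' fun j => (hasStrictFDerivAt_sum_pow _ t).congr_fderiv ?_
  ext v
  simp [mulVec, dotProduct, oddPowerSumsJacobian, mul_comm]

lemma det_oddPowerSumsJacobian_ne_zero {t : Fin k → ℝ} (ht : ∀ i, t i ≠ 0)
    (hinj : Injective fun i => t i ^ 2) : (oddPowerSumsJacobian t).det ≠ 0 := by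
  have hfactor : oddPowerSumsJacobian t = diagonal (fun j : Fin k => (2 * (j : ℕ) + 3 : ℝ)) *
      (diagonal (fun i => t i ^ 2) * vandermonde fun i => t i ^ 2)ᵀ := by
    ext j i
    simp only [oddPowerSumsJacobian, of_apply, diagonal_mul, transpose_apply, vandermonde_apply]
    ring
  rw [hfactor, det_mul, det_transpose, det_mul, det_diagonal, det_diagonal]
  exact mul_ne_zero (Finset.prod_ne_zero_iff.2 fun j _ => by positivity)
    (mul_ne_zero (Finset.prod_ne_zero_iff.2 fun i _ => pow_ne_zero _ (ht i))
      (det_vandermonde_ne_zero_iff.2 hinj))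

lemma map_oddPowerSums_nhds {t : Fin k → ℝ} (ht : ∀ i, t i ≠ 0)
    (hinj : Injective fun i => t i ^ 2) : map (oddPowerSums k) (𝓝 t) = 𝓝 (oddPowerSums k t) := by
  refine (hasStrictFDerivAt_oddPowerSums t).map_nhds_eq_of_surj ?_
  rw [LinearMap.coe_toContinuousLinearMap, LinearMap.range_eq_top, toLin'_apply']
  exact mulVec_surjective_iff_isUnit.2
    ((isUnit_iff_isUnit_det _).2 (det_oddPowerSumsJacobian_ne_zero ht hinj).isUnit)

end Jacobian

lemma eventually_exists_pos_oddPowerSum_eq {n : ℕ} {t : Fin (n + 1) → ℝ} (ht : ∀ i, 0 < t i)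
    (hinj : Injective t) :
    ∀ᶠ δ in 𝓝 0, ∃ x : Fin (n + 1) → ℝ, (∀ i, 0 < x i) ∧
      (∀ j < n, oddPowerSum x j = oddPowerSum t j) ∧ oddPowerSum x n = oddPowerSum t n + δ := by
  have hsq : Injective fun i => t i ^ 2 := fun i j h =>
    hinj ((pow_left_inj₀ (ht i).le (ht j).le two_ne_zero).1 h)
  have himg : oddPowerSums _ '' univ.pi (fun _ => Ioi 0) ∈ 𝓝 (oddPowerSums _ t) := by
    rw [← map_oddPowerSums_nhds (fun i => (ht i).ne') hsq]
    exact image_mem_map ((isOpen_set_pi finite_univ fun _ _ => isOpen_Ioi).mem_nhds fun i _ => ht i)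
  have hcurve : Tendsto (fun δ => update (oddPowerSums _ t) (Fin.last n) (oddPowerSum t n + δ))
      (𝓝 0) (𝓝 (oddPowerSums _ t)) := by
    have hc : Continuous fun δ => update (oddPowerSums _ t) (Fin.last n) (oddPowerSum t n + δ) :=
      continuous_const.update _ (continuous_const.add continuous_id)
    have h0 : update (oddPowerSums _ t) (Fin.last n) (oddPowerSum t n) = oddPowerSums _ t :=
      update_eq_self _ _
    simpa only [add_zero, h0] using hc.tendsto 0
  filter_upwards [hcurve himg] with δ ⟨x, hx, hxt⟩
  dsimp only at hxt
  refine ⟨x, fun i => hx i trivial, fun j hj => ?_, ?_⟩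
  · have := congrFun hxt ⟨j, by omega⟩
    rwa [update_of_ne (Fin.ne_of_lt (Fin.mk_lt_mk.2 (by simpa using hj)))] at this
  · simpa [oddPowerSums] using congrFun hxt (Fin.last n)

lemma eventually_exists_nonneg_oddPowerSum_eq {ι : Type*} [Fintype ι] {n : ℕ} {β : ι → ℝ}
    (hβ : ∀ i, 0 ≤ β i) {m : Fin (n + 1) → ι} (hm : Injective (β ∘ m))
    (hpos : ∀ i, 0 < β (m i)) :
    ∀ᶠ δ in 𝓝 0, ∃ y : ι → ℝ, (∀ i, 0 ≤ y i) ∧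
      (∀ j < n, oddPowerSum y j = oddPowerSum β j) ∧ oddPowerSum y n = oddPowerSum β n + δ := by
  filter_upwards [eventually_exists_pos_oddPowerSum_eq hpos hm] with δ ⟨x, hx, hlow, htop⟩
  have hsum (j : ℕ) :
      oddPowerSum (extend m x β) j + oddPowerSum (fun i => β (m i)) j =
        oddPowerSum β j + oddPowerSum x j :=
    sum_comp_extend_add hm.of_comp x β (· ^ (2 * j + 3))
  refine ⟨extend m x β, fun i => ?_, fun j hj => ?_, ?_⟩
  · by_cases hi : ∃ a, m a = i
    · obtain ⟨a, rfl⟩ := hi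
      exact hm.of_comp.extend_apply x β a ▸ (hx a).le
    · exact extend_apply' x β i hi ▸ hβ i
  · linarith [hsum j, hlow j hj]
  · linarith [hsum n, htop]

lemma exists_injective_pos_of_lt_ncard {ι : Type*} {β : ι → ℝ} (hβ : ∀ i, 0 ≤ β i) {n : ℕ}
    (h : n < (range β \ {0}).ncard) :
    ∃ m : Fin (n + 1) → ι, Injective (β ∘ m) ∧ ∀ i, 0 < β (m i) := by
  obtain ⟨s, hs, hcard⟩ := exists_subset_card_eq (Nat.succ_le_of_lt h)
  have : Finite s := finite_of_ncard_ne_zero (by omega)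
  let e : Fin (n + 1) ≃ s := (Finite.equivFinOfCardEq (by rwa [Nat.card_coe_set_eq])).symm
  have hv (i : Fin (n + 1)) : (e i : ℝ) ∈ range β \ {0} := hs (e i).2
  choose m hm using fun i => (hv i).1
  have hβm : β ∘ m = fun i => (e i : ℝ) := funext hm
  refine ⟨m, hβm ▸ Subtype.val_injective.comp e.injective, fun i => ?_⟩
  exact (hβ (m i)).lt_of_ne (hm i ▸ Ne.symm (hv i).2)

lemma exists_mul_neg_of_eventually_nhds_zero {p : ℝ → Prop} {c : ℝ} (hc : c ≠ 0)
    (h : ∀ᶠ δ in 𝓝 0, p δ) : ∃ δ, c * δ < 0 ∧ p δ := by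
  rcases hc.lt_or_gt with hc | hc
  · obtain ⟨δ, hδ, hp⟩ := h.exists_gt
    exact ⟨δ, mul_neg_of_neg_of_pos hc hδ, hp⟩
  · obtain ⟨δ, hδ, hp⟩ := h.exists_lt
    exact ⟨δ, mul_neg_of_pos_of_neg hc hδ, hp⟩

theorem stmt_9_general (n N : ℕ) (hn : 1 ≤ n) (α : Fin n → ℝ)
    (Γ : Set (Fin N → ℝ))
    (hΓ : Γ = {x | (∀ m, 0 ≤ x m) ∧
      ∀ j : Fin n, ∑ m, x m ^ (2 * (j : ℕ) + 3) = α j})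
    (hne : Γ.Nonempty) :
    (∃ β ∈ Γ, ∀ x ∈ Γ,
      (-1 : ℝ) ^ n * ∑ m, β m ^ (2 * n + 3) ≤ (-1 : ℝ) ^ n * ∑ m, x m ^ (2 * n + 3)) ∧
    (∀ β ∈ Γ, (∀ x ∈ Γ,
      (-1 : ℝ) ^ n * ∑ m, β m ^ (2 * n + 3) ≤ (-1 : ℝ) ^ n * ∑ m, x m ^ (2 * n + 3)) →
      (Set.range β \ {0}).ncard ≤ n) := by
  subst hΓ
  refine ⟨?_, fun β ⟨hβ, hβα⟩ hmin => ?_⟩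
  · obtain ⟨β, hβΓ, hmin⟩ := (isCompact_setOf_nonneg_oddPowerSum_eq hn α).exists_isMinOn hne
      ((continuous_oddPowerSum n).const_mul _).continuousOn
    exact ⟨β, hβΓ, hmin⟩
  by_contra! hcard
  obtain ⟨m, hm, hpos⟩ := exists_injective_pos_of_lt_ncard hβ hcard
  obtain ⟨δ, hδ, y, hy, hyα, hyn⟩ := exists_mul_neg_of_eventually_nhds_zero
    (pow_ne_zero n (by norm_num : (-1 : ℝ) ≠ 0)) (eventually_exists_nonneg_oddPowerSum_eq hβ hm hpos)
  have hlt : (-1 : ℝ) ^ n * oddPowerSum y n < (-1) ^ n * oddPowerSum β n := by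
    rw [hyn, mul_add]
    linarith
  exact (hmin y ⟨hy, fun j => (hyα j j.2).trans (hβα j)⟩).not_gt hlt

/-- **Existence of a constrained minimizer and bound on its distinct values.**
Fix `n ≥ 1`, `N ≥ 1` and `α_1, …, α_n ∈ ℝ`.  Let
`Γ = { x ∈ ℝ^N : x_m ≥ 0 and ∑_m x_m^{2j+1} = α_j for j = 1, …, n }` be nonempty
(the index `j : Fin n` corresponds to the mathematical index `j + 1`, so the exponent is
`2j + 3`).  Then (i) the function `x ↦ (-1)^n ∑_m x_m^{2n+3}` attains its minimum on `Γ`,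
and (ii) every minimizer has nonzero coordinates taking at most `n` distinct values. -/
theorem stmt_9 (n N : ℕ) (hn : 1 ≤ n) (hN : 1 ≤ N) (α : Fin n → ℝ)
    (Γ : Set (Fin N → ℝ))
    (hΓ : Γ = {x | (∀ m, 0 ≤ x m) ∧
      ∀ j : Fin n, ∑ m, x m ^ (2 * (j : ℕ) + 3) = α j})
    (hne : Γ.Nonempty) :
    (∃ β ∈ Γ, ∀ x ∈ Γ,
      (-1 : ℝ) ^ n * ∑ m, β m ^ (2 * n + 3) ≤ (-1 : ℝ) ^ n * ∑ m, x m ^ (2 * n + 3)) ∧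
    (∀ β ∈ Γ, (∀ x ∈ Γ,
      (-1 : ℝ) ^ n * ∑ m, β m ^ (2 * n + 3) ≤ (-1 : ℝ) ^ n * ∑ m, x m ^ (2 * n + 3)) →
      (Set.range β \ {0}).ncard ≤ n) :=
  stmt_9_general n N hn α Γ hΓ hne
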